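/- arXiv:1803.07885 — 4 statements merged into one kernel-verified Lean document; each statement's English description precedes it below -/
import Mathlib

section
/- Let R : [0,τ]² → ℝ be a covariance function (i.e., R is symmetric positive semi-definite) with R(0,0) = 0, satisfying |R(t,t) + R(u,v) - R(u,t) - R(t,v)| ≤ |t - (u ∧ v)|^β for all u, v, t ∈ [0,τ] and some β > 0. Then for all u, v, t ∈ [0,τ], |R(t,u) - R(t,v)| ≤ K |u - v|^{β/2}, where K = sup_{t∈[0,τ]} R(t,t)^{1/2} ≤ τ^{β/2}. -/
open Set

theorem stmt1 (τ β : ℝ) (hτ : 0 < τ) (hβ : 0 < β) (R : ℝ → ℝ → ℝ)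
    (hsymm : ∀ s t, R s t = R t s)
    (hpsd : ∀ (n : ℕ) (ts : Fin n → ℝ) (c : Fin n → ℝ),
      (∀ i, ts i ∈ Set.Icc 0 τ) →
      0 ≤ ∑ i, ∑ j, c i * c j * R (ts i) (ts j))
    (h0 : R 0 0 = 0)
    (hR : ∀ u v t, u ∈ Set.Icc 0 τ → v ∈ Set.Icc 0 τ → t ∈ Set.Icc 0 τ →
      |R t t + R u v - R u t - R t v| ≤ |t - min u v| ^ β) :
    (∀ u v t, u ∈ Set.Icc 0 τ → v ∈ Set.Icc 0 τ → t ∈ Set.Icc 0 τ →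
      |R t u - R t v| ≤
        Real.sqrt (sSup ((fun s => R s s) '' Set.Icc 0 τ)) * |u - v| ^ (β / 2)) ∧
    Real.sqrt (sSup ((fun s => R s s) '' Set.Icc 0 τ)) ≤ τ ^ (β / 2) := by
  have hmem0 : (0:ℝ) ∈ Set.Icc 0 τ := ⟨le_refl 0, hτ.le⟩
  -- R 0 t = 0 on [0, τ]
  have h0t : ∀ t ∈ Set.Icc 0 τ, R 0 t = 0 := by
    intro t ht
    have key : ∀ x : ℝ, 0 ≤ 0 * (x * x) + (2 * R 0 t) * x + R t t := by
      intro x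
      have hm : ∀ i, (![0, t] : Fin 2 → ℝ) i ∈ Set.Icc 0 τ := by
        intro i; fin_cases i
        · exact hmem0
        · exact ht
      have hps := hpsd 2 ![0, t] ![x, 1] hm
      simp only [Fin.sum_univ_two, Matrix.cons_val_zero, Matrix.cons_val_one,
        Matrix.head_cons] at hps
      have hst := hsymm t 0
      have expand : 0 * (x * x) + 2 * R 0 t * x + R t t
          = x * x * R 0 0 + x * 1 * R 0 t + (1 * x * R t 0 + 1 * 1 * R t t) := by
        rw [h0, hst]; ring
      rw [expand]; exact hps
    have hd := discrim_le_zero key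
    unfold discrim at hd
    nlinarith [sq_nonneg (R 0 t)]
  -- diagonal nonneg
  have hdiag0 : ∀ t ∈ Set.Icc 0 τ, 0 ≤ R t t := by
    intro t ht
    have := hpsd 1 ![t] ![1] (by intro i; fin_cases i; simpa using ht)
    simpa using this
  -- diagonal ≤ τ^β
  have hdiagle : ∀ t ∈ Set.Icc 0 τ, R t t ≤ τ ^ β := by
    intro t ht
    have h1 := hR 0 0 t hmem0 hmem0 ht
    rw [min_self, h0, h0t t ht, hsymm t 0, h0t t ht] at h1
    simp only [sub_zero, add_zero] at h1
    have h2 : R t t ≤ |t| ^ β := (le_abs_self _).trans h1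
    refine h2.trans ?_
    have : |t| ≤ τ := by rw [abs_of_nonneg ht.1]; exact ht.2
    exact Real.rpow_le_rpow (abs_nonneg t) this hβ.le
  -- sup facts
  set S := sSup ((fun s => R s s) '' Set.Icc 0 τ) with hSdef
  have hne : ((fun s => R s s) '' Set.Icc 0 τ).Nonempty := ⟨R 0 0, 0, hmem0, rfl⟩
  have hbdd : BddAbove ((fun s => R s s) '' Set.Icc 0 τ) := by
    refine ⟨τ ^ β, ?_⟩
    rintro _ ⟨t, ht, rfl⟩
    exact hdiagle t ht
  have hRS : ∀ t ∈ Set.Icc 0 τ, R t t ≤ S := fun t ht => le_csSup hbdd ⟨t, ht, rfl⟩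
  have hSle : S ≤ τ ^ β := csSup_le hne (by rintro _ ⟨t, ht, rfl⟩; exact hdiagle t ht)
  have hS0 : 0 ≤ S := le_trans (hdiag0 0 hmem0) (hRS 0 hmem0)
  constructor
  · intro u v t hu hv ht
    -- E = increment variance
    have hE0 : 0 ≤ R u u + R v v - 2 * R u v := by
      have hm : ∀ i, (![u, v] : Fin 2 → ℝ) i ∈ Set.Icc 0 τ := by
        intro i; fin_cases i
        · exact hu
        · exact hv
      have hps := hpsd 2 ![u, v] ![1, -1] hm
      simp only [Fin.sum_univ_two, Matrix.cons_val_zero, Matrix.cons_val_one,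
        Matrix.head_cons] at hps
      have hvu := hsymm v u
      nlinarith [hps]
    have hEle : R u u + R v v - 2 * R u v ≤ |u - v| ^ β := by
      have h1 := hR u u v hu hu hv
      rw [min_self, hsymm v u] at h1
      calc R u u + R v v - 2 * R u v
          = R v v + R u u - R u v - R u v := by ring
        _ ≤ |R v v + R u u - R u v - R u v| := le_abs_self _
        _ ≤ |v - u| ^ β := h1
        _ = |u - v| ^ β := by rw [abs_sub_comm]
    -- Cauchy-Schwarz via 3-point psd
    have hCS : (R t u - R t v) ^ 2 ≤ R t t * (R u u + R v v - 2 * R u v) := by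
      have key : ∀ x : ℝ, 0 ≤ R t t * (x * x) + (2 * (R t u - R t v)) * x
          + (R u u + R v v - 2 * R u v) := by
        intro x
        have hm : ∀ i, (![t, u, v] : Fin 3 → ℝ) i ∈ Set.Icc 0 τ := by
          intro i; fin_cases i
          · exact ht
          · exact hu
          · exact hv
        have hps := hpsd 3 ![t, u, v] ![x, 1, -1] hm
        simp only [Fin.sum_univ_three, Matrix.cons_val_zero, Matrix.cons_val_one,
          Matrix.head_cons, Matrix.cons_val_two, Matrix.tail_cons] at hps
        rw [hsymm u t, hsymm v t, hsymm v u] at hps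
        linarith [hps]
      have hd := discrim_le_zero key
      unfold discrim at hd
      nlinarith [hd]
    have hsq : (R t u - R t v) ^ 2 ≤ S * |u - v| ^ β := by
      calc (R t u - R t v) ^ 2 ≤ R t t * (R u u + R v v - 2 * R u v) := hCS
        _ ≤ S * |u - v| ^ β := mul_le_mul (hRS t ht) hEle hE0 hS0
    have habs := Real.abs_le_sqrt hsq
    calc |R t u - R t v| ≤ Real.sqrt (S * |u - v| ^ β) := habs
      _ = Real.sqrt S * Real.sqrt (|u - v| ^ β) := Real.sqrt_mul hS0 _
      _ = Real.sqrt S * |u - v| ^ (β / 2) := by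
          have hh : Real.sqrt (|u - v| ^ β) = |u - v| ^ (β / 2) := by
            rw [Real.sqrt_eq_rpow, ← Real.rpow_mul (abs_nonneg _)]
            congr 1
            ring
          rw [hh]
  · calc Real.sqrt S ≤ Real.sqrt (τ ^ β) := Real.sqrt_le_sqrt hSle
      _ = τ ^ (β / 2) := by
        rw [Real.sqrt_eq_rpow, ← Real.rpow_mul hτ.le]
        congr 1
        ring
end

section
/- Let μ be a nonnegative measure on ℝ^d satisfying ∫_{ℝ^d} (1 + |ξ|^{2β})^{-1} μ(dξ) < ∞ for some β ∈ (0,2], and let t > 0. Then the double integral ∫_0^t ∫_0^t ∫_{ℝ^d} (|ξ|⁴/4) e^{-(2t-s-s')|ξ|²/2} |t - (s ∧ s')|^β μ(dξ) ds ds' is finite. -/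
open MeasureTheory Real Set
open scoped ENNReal

/-!
With `r = ‖ξ‖`, the double time integral is at most a constant times `(1 + r ^ (2β))⁻¹`, which is
`μ`-integrable by hypothesis; since that weight is positive, `μ` is s-finite and Tonelli applies.
For `r ≤ 1` the integrand is at most `t ^ β`. For `r ≥ 1` put `c = r² / 4`, `a = t - s`,
`b = t - s'`; then `r⁴/4 · e^{-(a+b)r²/2} = 4 e^{-c(a+b)} · c e^{-ca} · c e^{-cb}`. The first
factor absorbs `|t - s ∧ s'| ^ β ≤ (a + b) ^ β` at the cost of `(β / e) ^ β c^{-β} ≍ r^{-2β}`,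
because `ρ ^ β e^{-ρ}` is maximal at `ρ = β`, and the other two integrate to at most `1` over `[0, t]`.
-/

lemma sFinite_of_lintegral_lt_top {α : Type*} [MeasurableSpace α] {μ : Measure α}
    {w : α → ℝ≥0∞} (hw : AEMeasurable w μ) (hw_zero : ∀ᵐ x ∂μ, w x ≠ 0)
    (hw_top : ∀ᵐ x ∂μ, w x ≠ ∞) (hint : ∫⁻ x, w x ∂μ < ∞) : SFinite μ := by
  have : IsFiniteMeasure (μ.withDensity w) := isFiniteMeasure_withDensity hint.ne
  rw [← withDensity_inv_same₀ hw hw_zero hw_top]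
  infer_instance

lemma lintegral_lintegral_lintegral_comm {α β γ : Type*} [MeasurableSpace α]
    [MeasurableSpace β] [MeasurableSpace γ] {μ : Measure α} {ν : Measure β} {ρ : Measure γ}
    [SFinite μ] [SFinite ν] [SFinite ρ] {f : α → β → γ → ℝ≥0∞}
    (hf : Measurable fun p : α × β × γ => f p.1 p.2.1 p.2.2) :
    ∫⁻ a, ∫⁻ b, ∫⁻ c, f a b c ∂ρ ∂ν ∂μ = ∫⁻ c, ∫⁻ a, ∫⁻ b, f a b c ∂ν ∂μ ∂ρ := by
  calc ∫⁻ a, ∫⁻ b, ∫⁻ c, f a b c ∂ρ ∂ν ∂μ = ∫⁻ a, ∫⁻ c, ∫⁻ b, f a b c ∂ν ∂ρ ∂μ :=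
        lintegral_congr fun a => lintegral_lintegral_swap
          (hf.comp (measurable_const.prodMk measurable_id)).aemeasurable
    _ = ∫⁻ c, ∫⁻ a, ∫⁻ b, f a b c ∂ν ∂μ ∂ρ := lintegral_lintegral_swap
          (Measurable.lintegral_prod_right' (hf.comp (by fun_prop :
            Measurable fun q : (α × γ) × β => (q.1.1, q.2, q.1.2)))).aemeasurable

lemma rpow_le_mul_exp {β u : ℝ} (hβ : 0 < β) (hu : 0 ≤ u) :
    u ^ β ≤ (β / exp 1) ^ β * exp u := by
  have h : u / β ≤ exp (u / β - 1) := by linarith [add_one_le_exp (u / β - 1)]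
  calc u ^ β = β ^ β * (u / β) ^ β := by
        rw [div_rpow hu hβ.le]; field_simp [(rpow_pos_of_pos hβ β).ne']
    _ ≤ β ^ β * exp (u / β - 1) ^ β := by gcongr
    _ = (β / exp 1) ^ β * exp u := by
        rw [← exp_mul, div_rpow hβ.le (exp_pos 1).le, exp_one_rpow, sub_mul,
          div_mul_cancel₀ _ hβ.ne', one_mul, exp_sub]
        ring

lemma rpow_mul_exp_neg_mul_le {β c r : ℝ} (hβ : 0 < β) (hc : 0 < c) (hr : 0 ≤ r) :
    r ^ β * exp (-(c * r)) ≤ (β / exp 1) ^ β / c ^ β := by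
  rw [le_div_iff₀ (rpow_pos_of_pos hc β)]
  calc r ^ β * exp (-(c * r)) * c ^ β = (c * r) ^ β * exp (-(c * r)) := by
        rw [mul_rpow hc.le hr]; ring
    _ ≤ (β / exp 1) ^ β * exp (c * r) * exp (-(c * r)) := by
        gcongr; exact rpow_le_mul_exp hβ (by positivity)
    _ = (β / exp 1) ^ β := by rw [mul_assoc, ← exp_add]; simp

lemma lintegral_Icc_mul_exp_neg_mul_sub_le {c t : ℝ} (hc : 0 < c) (ht : 0 ≤ t) :
    ∫⁻ s in Icc 0 t, ENNReal.ofReal (c * exp (-(c * (t - s)))) ≤ 1 := by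
  have hcont : Continuous fun s => c * exp (-(c * (t - s))) := by fun_prop
  have hint : ∫ s in (0)..t, c * exp (-(c * (t - s))) = 1 - exp (-(c * t)) := by
    simp only [show ∀ s, -(c * (t - s)) = c * s - c * t from fun s => by ring]
    rw [intervalIntegral.integral_const_mul,
      intervalIntegral.integral_comp_mul_sub (fun x => exp x) hc.ne', integral_exp]
    simp only [smul_eq_mul, sub_self, mul_zero, zero_sub, exp_zero]
    field_simp
  rw [← ofReal_integral_eq_lintegral_ofReal hcont.integrableOn_Icc
      (ae_of_all _ fun s => by positivity), integral_Icc_eq_integral_Ioc,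
    ← intervalIntegral.integral_of_le ht, hint, ENNReal.ofReal_le_one]
  linarith [exp_pos (-(c * t))]

noncomputable def mixedIntegrand (β t r s s' : ℝ) : ℝ :=
  r ^ 4 / 4 * exp (-(2 * t - s - s') * r ^ 2 / 2) * |t - min s s'| ^ β

section

variable {β t r s s' : ℝ}

lemma abs_sub_min_le (hs : s ∈ Icc 0 t) (hs' : s' ∈ Icc 0 t) :
    |t - min s s'| ≤ (t - s) + (t - s') := by
  obtain ⟨hs0, hst⟩ := hs
  obtain ⟨hs'0, hs't⟩ := hs'
  rw [abs_of_nonneg (by linarith [min_le_left s s'])]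
  linarith [le_min (show s + s' - t ≤ s by linarith) (show s + s' - t ≤ s' by linarith)]

lemma mixedIntegrand_le_of_le_one (hβ : 0 ≤ β) (hr0 : 0 ≤ r) (hr1 : r ≤ 1)
    (hs : s ∈ Icc 0 t) (hs' : s' ∈ Icc 0 t) : mixedIntegrand β t r s s' ≤ t ^ β := by
  have hexp : exp (-(2 * t - s - s') * r ^ 2 / 2) ≤ 1 :=
    exp_le_one_iff.2 <| by nlinarith [hs.2, hs'.2, sq_nonneg r]
  have hr4 : r ^ 4 / 4 ≤ 1 := by nlinarith [pow_le_one₀ hr0 hr1 (n := 4)]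
  have hmin : |t - min s s'| ≤ t := by
    rw [abs_of_nonneg (by linarith [min_le_left s s', hs.2])]
    linarith [le_min hs.1 hs'.1]
  calc mixedIntegrand β t r s s' ≤ 1 * 1 * t ^ β := by unfold mixedIntegrand; gcongr
    _ = t ^ β := by ring

lemma mixedIntegrand_le {c : ℝ} (hβ : 0 < β) (hc : 0 < c) (hrc : r ^ 2 = 4 * c)
    (hs : s ∈ Icc 0 t) (hs' : s' ∈ Icc 0 t) :
    mixedIntegrand β t r s s' ≤ 4 * ((β / exp 1) ^ β / c ^ β) *
      (c * exp (-(c * (t - s)))) * (c * exp (-(c * (t - s')))) := by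
  set ρ := |t - min s s'|
  have hρ : ρ ^ β * exp (-(c * ((t - s) + (t - s')))) ≤ (β / exp 1) ^ β / c ^ β :=
    calc ρ ^ β * exp (-(c * ((t - s) + (t - s')))) ≤ ρ ^ β * exp (-(c * ρ)) := by
          gcongr; exact abs_sub_min_le hs hs'
      _ ≤ (β / exp 1) ^ β / c ^ β := rpow_mul_exp_neg_mul_le hβ hc (abs_nonneg _)
  have hexp : exp (-(2 * t - s - s') * r ^ 2 / 2) =
      exp (-(c * ((t - s) + (t - s')))) * exp (-(c * (t - s))) * exp (-(c * (t - s'))) := by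
    rw [← exp_add, ← exp_add, hrc]; ring_nf
  calc mixedIntegrand β t r s s'
      = 4 * (ρ ^ β * exp (-(c * ((t - s) + (t - s'))))) *
          (c * exp (-(c * (t - s)))) * (c * exp (-(c * (t - s')))) := by
        rw [mixedIntegrand, hexp, show r ^ 4 = (r ^ 2) ^ 2 by ring, hrc]; ring
    _ ≤ _ := by gcongr

lemma lintegral_mixedIntegrand_le_of_le_one (hβ : 0 ≤ β) (ht : 0 ≤ t) (hr0 : 0 ≤ r)
    (hr1 : r ≤ 1) :
    ∫⁻ s in Icc 0 t, ∫⁻ s' in Icc 0 t, ENNReal.ofReal (mixedIntegrand β t r s s') ≤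
      ENNReal.ofReal (t ^ β * t ^ 2) := by
  calc ∫⁻ s in Icc 0 t, ∫⁻ s' in Icc 0 t, ENNReal.ofReal (mixedIntegrand β t r s s')
      ≤ ∫⁻ _ in Icc 0 t, ∫⁻ _ in Icc 0 t, ENNReal.ofReal (t ^ β) :=
        setLIntegral_mono' measurableSet_Icc fun s hs => setLIntegral_mono' measurableSet_Icc
          fun s' hs' => ENNReal.ofReal_le_ofReal (mixedIntegrand_le_of_le_one hβ hr0 hr1 hs hs')
    _ = ENNReal.ofReal (t ^ β * t ^ 2) := by
        simp only [setLIntegral_const, Real.volume_Icc, sub_zero]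
        rw [← ENNReal.ofReal_mul (by positivity), ← ENNReal.ofReal_mul (by positivity)]
        ring_nf

lemma lintegral_mixedIntegrand_le {c : ℝ} (hβ : 0 < β) (ht : 0 ≤ t) (hc : 0 < c)
    (hrc : r ^ 2 = 4 * c) :
    ∫⁻ s in Icc 0 t, ∫⁻ s' in Icc 0 t, ENNReal.ofReal (mixedIntegrand β t r s s') ≤
      ENNReal.ofReal (4 * ((β / exp 1) ^ β / c ^ β)) := by
  set f : ℝ → ℝ≥0∞ := fun s => ENNReal.ofReal (c * exp (-(c * (t - s))))
  calc ∫⁻ s in Icc 0 t, ∫⁻ s' in Icc 0 t, ENNReal.ofReal (mixedIntegrand β t r s s')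
      ≤ ∫⁻ s in Icc 0 t, ∫⁻ s' in Icc 0 t,
          ENNReal.ofReal (4 * ((β / exp 1) ^ β / c ^ β)) * f s * f s' := by
        refine setLIntegral_mono' measurableSet_Icc fun s hs =>
          setLIntegral_mono' measurableSet_Icc fun s' hs' => ?_
        rw [← ENNReal.ofReal_mul (by positivity), ← ENNReal.ofReal_mul (by positivity)]
        exact ENNReal.ofReal_le_ofReal (mixedIntegrand_le hβ hc hrc hs hs')
    _ = ENNReal.ofReal (4 * ((β / exp 1) ^ β / c ^ β)) *
          (∫⁻ s in Icc 0 t, f s) * ∫⁻ s' in Icc 0 t, f s' := by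
        rw [lintegral_lintegral_mul (by fun_prop) (by fun_prop),
          lintegral_const_mul' _ _ ENNReal.ofReal_ne_top]
    _ ≤ ENNReal.ofReal (4 * ((β / exp 1) ^ β / c ^ β)) * 1 * 1 := by
        gcongr <;> exact lintegral_Icc_mul_exp_neg_mul_sub_le hc ht
    _ = ENNReal.ofReal (4 * ((β / exp 1) ^ β / c ^ β)) := by ring

lemma exists_lintegral_mixedIntegrand_le (hβ : 0 < β) (ht : 0 ≤ t) :
    ∃ C, ∀ r, 0 ≤ r → ∫⁻ s in Icc 0 t, ∫⁻ s' in Icc 0 t,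
      ENNReal.ofReal (mixedIntegrand β t r s s') ≤ ENNReal.ofReal (C * (1 + r ^ (2 * β))⁻¹) := by
  set K := 4 * (β / exp 1) ^ β * 4 ^ β
  refine ⟨2 * (t ^ β * t ^ 2 + K), fun r hr => ?_⟩
  have hK : 0 ≤ K := by positivity
  have htβ : 0 ≤ t ^ β * t ^ 2 := by positivity
  have hr2β : 0 ≤ r ^ (2 * β) := by positivity
  rcases le_total r 1 with hr1 | hr1
  · refine (lintegral_mixedIntegrand_le_of_le_one hβ.le ht hr hr1).trans
      (ENNReal.ofReal_le_ofReal ?_)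
    have : r ^ (2 * β) ≤ 1 := rpow_le_one hr hr1 (by positivity)
    rw [← div_eq_mul_inv, le_div_iff₀ (by positivity)]
    nlinarith
  · have hc : 0 < r ^ 2 / 4 := by positivity
    refine (lintegral_mixedIntegrand_le hβ ht hc (by ring)).trans (ENNReal.ofReal_le_ofReal ?_)
    have hpow : (r ^ 2 / 4) ^ β = r ^ (2 * β) / 4 ^ β := by
      rw [div_rpow (by positivity) (by norm_num), rpow_mul hr, rpow_two]
    have : 1 ≤ r ^ (2 * β) := one_le_rpow hr1 (by positivity)
    rw [hpow, div_div_eq_mul_div, mul_div_assoc', ← div_eq_mul_inv,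
      div_le_div_iff₀ (by positivity) (by positivity)]
    nlinarith [mul_nonneg hK (sub_nonneg.2 this), mul_nonneg htβ hr2β]

end

theorem stmt4_general (d : ℕ) (β t : ℝ) (hβ : 0 < β) (ht : 0 < t)
    (μ : Measure (EuclideanSpace ℝ (Fin d)))
    (hμ : ∫⁻ ξ, ENNReal.ofReal ((1 + ‖ξ‖ ^ (2 * β))⁻¹) ∂μ < ⊤) :
    ∫⁻ s in Set.Icc (0:ℝ) t, ∫⁻ s' in Set.Icc (0:ℝ) t, ∫⁻ ξ,
      ENNReal.ofReal (‖ξ‖ ^ 4 / 4 * Real.exp (-(2 * t - s - s') * ‖ξ‖ ^ 2 / 2) *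
        |t - min s s'| ^ β) ∂μ < ⊤ := by
  have : SFinite μ := sFinite_of_lintegral_lt_top (by fun_prop)
    (ae_of_all _ fun ξ => by positivity) (ae_of_all _ fun _ => ENNReal.ofReal_ne_top) hμ
  obtain ⟨C, hC⟩ := exists_lintegral_mixedIntegrand_le hβ ht.le
  calc ∫⁻ s in Icc 0 t, ∫⁻ s' in Icc 0 t, ∫⁻ ξ, ENNReal.ofReal (mixedIntegrand β t ‖ξ‖ s s') ∂μ
      = ∫⁻ ξ, (∫⁻ s in Icc 0 t, ∫⁻ s' in Icc 0 t,
          ENNReal.ofReal (mixedIntegrand β t ‖ξ‖ s s')) ∂μ :=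
        lintegral_lintegral_lintegral_comm (by unfold mixedIntegrand; fun_prop)
    _ ≤ ∫⁻ ξ, ENNReal.ofReal C * ENNReal.ofReal ((1 + ‖ξ‖ ^ (2 * β))⁻¹) ∂μ := by
        refine lintegral_mono fun ξ => (hC ‖ξ‖ (norm_nonneg ξ)).trans_eq ?_
        exact ENNReal.ofReal_mul' (by positivity)
    _ < ⊤ := by
        rw [lintegral_const_mul' _ _ ENNReal.ofReal_ne_top]
        exact ENNReal.mul_lt_top ENNReal.ofReal_lt_top hμ

theorem stmt4 (d : ℕ) (β t : ℝ) (hβ : 0 < β) (hβ2 : β ≤ 2) (ht : 0 < t)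
    (μ : Measure (EuclideanSpace ℝ (Fin d)))
    (hμ : ∫⁻ ξ, ENNReal.ofReal ((1 + ‖ξ‖ ^ (2 * β))⁻¹) ∂μ < ⊤) :
    ∫⁻ s in Set.Icc (0:ℝ) t, ∫⁻ s' in Set.Icc (0:ℝ) t, ∫⁻ ξ,
      ENNReal.ofReal (‖ξ‖ ^ 4 / 4 * Real.exp (-(2 * t - s - s') * ‖ξ‖ ^ 2 / 2) *
        |t - min s s'| ^ β) ∂μ < ⊤ :=
  stmt4_general d β t hβ ht μ hμ
end

section
/- Let β ∈ (0,2] and t > 0. The symmetric double integral 2 ∫_{|ξ|>1} (|ξ|⁴/4) [∫_0^t e^{-(t-s)|ξ|²/2} (∫_0^s e^{-(t-s')|ξ|²/2} |t-s'|^β ds') ds] μ(dξ) is bounded by K ∫_{|ξ|>1} |ξ|^{-2β} μ(dξ) for a constant K depending only on β, and is hence finite whenever ∫_{ℝ^d} (1+|ξ|^{2β})^{-1} μ(dξ) < ∞. -/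
/-!
After the substitution `r = t - s'` the inner integral is at most
`∫_0^∞ r^β e^{-r|ξ|²/2} dr = (2/|ξ|²)^{β+1} Γ(β+1)`, and the outer weight integrates
to at most `2/|ξ|²`, so the integrand is bounded by `2^β Γ(β+1) |ξ|^{-2β}`.
On `|ξ| > 1` one has `|ξ|^{-2β} ≤ 2 (1 + |ξ|^{2β})⁻¹`, which gives finiteness.
-/

open MeasureTheory ENNReal Real Set

lemma intervalIntegral_rpow_mul_exp_neg_mul_le_Gamma {β c u v : ℝ} (hβ : -1 < β) (hc : 0 < c)
    (hu : 0 ≤ u) (huv : u ≤ v) :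
    ∫ r in u..v, r ^ β * exp (-(c * r)) ≤ (1 / c) ^ (β + 1) * Gamma (β + 1) := by
  have hΓ : ∫ r in Ioi 0, r ^ β * exp (-(c * r)) = (1 / c) ^ (β + 1) * Gamma (β + 1) := by
    simpa using integral_rpow_mul_exp_neg_mul_Ioi (a := β + 1) (by linarith) hc
  rw [intervalIntegral.integral_of_le huv, ← hΓ]
  refine setIntegral_mono_set (Integrable.of_integral_ne_zero ?_) ?_
    (Ioc_subset_Ioi_self.trans (Ioi_subset_Ioi hu)).eventuallyLE
  · rw [hΓ]
    have := Gamma_pos_of_pos (show 0 < β + 1 by linarith)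
    positivity
  · filter_upwards [ae_restrict_mem measurableSet_Ioi] with r hr
    have : 0 < r := hr
    positivity

lemma integral_exp_neg_mul_abs_rpow_le {β a s t : ℝ} (hβ : -1 < β) (ha : 0 < a) (hs : 0 ≤ s)
    (hst : s ≤ t) :
    ∫ s' in (0:ℝ)..s, exp (-(t - s') * a / 2) * |t - s'| ^ β
      ≤ (2 / a) ^ (β + 1) * Gamma (β + 1) := by
  rw [intervalIntegral.integral_comp_sub_left (fun r => exp (-r * a / 2) * |r| ^ β) t, sub_zero]
  have h_abs : ∀ r ∈ uIcc (t - s) t,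
      exp (-r * a / 2) * |r| ^ β = r ^ β * exp (-(a / 2 * r)) := by
    intro r hr
    rw [uIcc_of_le (by linarith)] at hr
    rw [abs_of_nonneg (by linarith [hr.1]), mul_comm]
    ring_nf
  rw [intervalIntegral.integral_congr h_abs]
  simpa only [one_div_div] using intervalIntegral_rpow_mul_exp_neg_mul_le_Gamma
    (u := t - s) (v := t) hβ (half_pos ha) (by linarith) (by linarith)

lemma integral_exp_neg_mul_mul_le {a t M : ℝ} {g : ℝ → ℝ} (ha : 0 < a) (ht : 0 ≤ t)
    (hM : 0 ≤ M) (hg : Continuous g) (hgM : ∀ s ∈ Icc 0 t, g s ≤ M) :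
    ∫ s in (0:ℝ)..t, exp (-(t - s) * a / 2) * g s ≤ 2 / a * M := by
  have h_exp : ∫ s in (0:ℝ)..t, exp (-(t - s) * a / 2) ≤ 2 / a := by
    simpa using integral_exp_neg_mul_abs_rpow_le (β := 0) (by norm_num) ha ht le_rfl
  calc ∫ s in (0:ℝ)..t, exp (-(t - s) * a / 2) * g s
      ≤ ∫ s in (0:ℝ)..t, exp (-(t - s) * a / 2) * M := by
        refine intervalIntegral.integral_mono_on ht
          (Continuous.intervalIntegrable (by fun_prop) _ _)
          (Continuous.intervalIntegrable (by fun_prop) _ _) fun s hs => ?_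
        exact mul_le_mul_of_nonneg_left (hgM s hs) (exp_pos _).le
    _ ≤ 2 / a * M := by
        rw [intervalIntegral.integral_mul_const]
        exact mul_le_mul_of_nonneg_right h_exp hM

lemma pow_four_div_four_mul_doubleIntegral_le {β t n : ℝ} (hβ : 0 ≤ β) (ht : 0 ≤ t)
    (hn : 0 < n) :
    n ^ 4 / 4 *
      ∫ s in (0:ℝ)..t, exp (-(t - s) * n ^ 2 / 2) *
        ∫ s' in (0:ℝ)..s, exp (-(t - s') * n ^ 2 / 2) * |t - s'| ^ β
    ≤ 2 ^ β * Gamma (β + 1) * n ^ (-(2 * β)) := by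
  have ha : 0 < n ^ 2 := by positivity
  have h_cont : Continuous fun s' => exp (-(t - s') * n ^ 2 / 2) * |t - s'| ^ β := by
    fun_prop (disch := exact fun _ => Or.inr hβ)
  have h_outer := integral_exp_neg_mul_mul_le ha ht (by positivity)
    (intervalIntegral.continuous_primitive (fun u v => h_cont.intervalIntegrable u v) 0)
    fun s hs => integral_exp_neg_mul_abs_rpow_le (by linarith) ha hs.1 hs.2
  calc n ^ 4 / 4 * _ ≤ n ^ 4 / 4 * (2 / n ^ 2 * ((2 / n ^ 2) ^ (β + 1) * Gamma (β + 1))) := by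
        gcongr
    _ = 2 ^ β * Gamma (β + 1) * n ^ (-(2 * β)) := by
        rw [rpow_add_one (by positivity), div_rpow zero_le_two ha.le, rpow_neg hn.le,
          rpow_mul hn.le]
        norm_cast
        field_simp
        norm_num

lemma rpow_neg_le_two_mul_inv_one_add_rpow {x p : ℝ} (hx : 1 ≤ x) (hp : 0 ≤ p) :
    x ^ (-p) ≤ 2 * (1 + x ^ p)⁻¹ := by
  have h_one : 1 ≤ x ^ p := one_le_rpow hx hp
  rw [rpow_neg (zero_le_one.trans hx), ← div_eq_mul_inv, inv_eq_one_div,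
    div_le_div_iff₀ (by linarith) (by linarith)]
  linarith

lemma setLIntegral_ofReal_le_ofReal_mul {α : Type*} [MeasurableSpace α] {μ : Measure α}
    {s : Set α} (hs : MeasurableSet s) {f g : α → ℝ} {C : ℝ} (hC : 0 ≤ C)
    (hfg : ∀ x ∈ s, f x ≤ C * g x) :
    ∫⁻ x in s, ENNReal.ofReal (f x) ∂μ
      ≤ ENNReal.ofReal C * ∫⁻ x in s, ENNReal.ofReal (g x) ∂μ := by
  rw [← lintegral_const_mul' _ _ ofReal_ne_top]
  exact setLIntegral_mono' hs fun x hx =>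
    (ofReal_le_ofReal (hfg x hx)).trans_eq (ofReal_mul hC)

lemma setLIntegral_one_lt_norm_rpow_neg_le {E : Type*} [NormedAddCommGroup E] [MeasurableSpace E]
    [OpensMeasurableSpace E] (μ : Measure E) {p : ℝ} (hp : 0 ≤ p) :
    ∫⁻ ξ in {ξ : E | 1 < ‖ξ‖}, ENNReal.ofReal (‖ξ‖ ^ (-p)) ∂μ
      ≤ 2 * ∫⁻ ξ, ENNReal.ofReal ((1 + ‖ξ‖ ^ p)⁻¹) ∂μ := by
  calc ∫⁻ ξ in {ξ : E | 1 < ‖ξ‖}, ENNReal.ofReal (‖ξ‖ ^ (-p)) ∂μ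
      ≤ ENNReal.ofReal 2 *
          ∫⁻ ξ in {ξ : E | 1 < ‖ξ‖}, ENNReal.ofReal ((1 + ‖ξ‖ ^ p)⁻¹) ∂μ :=
        setLIntegral_ofReal_le_ofReal_mul (measurableSet_lt measurable_const measurable_norm)
          zero_le_two fun ξ hξ => rpow_neg_le_two_mul_inv_one_add_rpow (le_of_lt hξ) hp
    _ ≤ 2 * ∫⁻ ξ, ENNReal.ofReal ((1 + ‖ξ‖ ^ p)⁻¹) ∂μ := by
        rw [ofReal_ofNat]
        exact mul_le_mul_right (setLIntegral_le_lintegral _ _) 2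

theorem stmt6_general (β : ℝ) (hβ : 0 < β) :
    ∃ K : ℝ, 0 < K ∧ ∀ (d : ℕ) (μ : Measure (EuclideanSpace ℝ (Fin d))) (t : ℝ),
      0 < t →
      (2 * ∫⁻ ξ in {ξ : EuclideanSpace ℝ (Fin d) | 1 < ‖ξ‖},
          ENNReal.ofReal (‖ξ‖ ^ 4 / 4 *
            ∫ s in (0:ℝ)..t, Real.exp (-(t - s) * ‖ξ‖ ^ 2 / 2) *
              ∫ s' in (0:ℝ)..s, Real.exp (-(t - s') * ‖ξ‖ ^ 2 / 2) * |t - s'| ^ β) ∂μ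
        ≤ ENNReal.ofReal K *
          ∫⁻ ξ in {ξ : EuclideanSpace ℝ (Fin d) | 1 < ‖ξ‖},
            ENNReal.ofReal (‖ξ‖ ^ (-(2 * β))) ∂μ) ∧
      ((∫⁻ ξ, ENNReal.ofReal ((1 + ‖ξ‖ ^ (2 * β))⁻¹) ∂μ < ⊤) →
        2 * ∫⁻ ξ in {ξ : EuclideanSpace ℝ (Fin d) | 1 < ‖ξ‖},
          ENNReal.ofReal (‖ξ‖ ^ 4 / 4 *
            ∫ s in (0:ℝ)..t, Real.exp (-(t - s) * ‖ξ‖ ^ 2 / 2) *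
              ∫ s' in (0:ℝ)..s, Real.exp (-(t - s') * ‖ξ‖ ^ 2 / 2) * |t - s'| ^ β) ∂μ
          < ⊤) := by
  set C := 2 ^ β * Gamma (β + 1)
  have hC : 0 < C := by have := Gamma_pos_of_pos (show 0 < β + 1 by linarith); positivity
  refine ⟨2 * C, by positivity, fun d μ t ht => ?_⟩
  have h_bound := setLIntegral_ofReal_le_ofReal_mul (μ := μ)
    (measurableSet_lt measurable_const measurable_norm) hC.le
    fun ξ (hξ : 1 < ‖ξ‖) =>
      pow_four_div_four_mul_doubleIntegral_le hβ.le ht.le (zero_lt_one.trans hξ)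
  have h_two : 2 * ENNReal.ofReal C = ENNReal.ofReal (2 * C) := by
    rw [ofReal_mul zero_le_two, ofReal_ofNat]
  have h_main := mul_le_mul_right h_bound 2
  rw [← mul_assoc, h_two] at h_main
  refine ⟨h_main, fun h_fin => h_main.trans_lt (mul_lt_top ofReal_lt_top ?_)⟩
  exact (setLIntegral_one_lt_norm_rpow_neg_le μ (by positivity)).trans_lt
    (mul_lt_top ofNat_lt_top h_fin)

theorem stmt6 (β : ℝ) (hβ : 0 < β) (hβ2 : β ≤ 2) :
    ∃ K : ℝ, 0 < K ∧ ∀ (d : ℕ) (μ : Measure (EuclideanSpace ℝ (Fin d))) (t : ℝ),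
      0 < t →
      (2 * ∫⁻ ξ in {ξ : EuclideanSpace ℝ (Fin d) | 1 < ‖ξ‖},
          ENNReal.ofReal (‖ξ‖ ^ 4 / 4 *
            ∫ s in (0:ℝ)..t, Real.exp (-(t - s) * ‖ξ‖ ^ 2 / 2) *
              ∫ s' in (0:ℝ)..s, Real.exp (-(t - s') * ‖ξ‖ ^ 2 / 2) * |t - s'| ^ β) ∂μ
        ≤ ENNReal.ofReal K *
          ∫⁻ ξ in {ξ : EuclideanSpace ℝ (Fin d) | 1 < ‖ξ‖},
            ENNReal.ofReal (‖ξ‖ ^ (-(2 * β))) ∂μ) ∧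
      ((∫⁻ ξ, ENNReal.ofReal ((1 + ‖ξ‖ ^ (2 * β))⁻¹) ∂μ < ⊤) →
        2 * ∫⁻ ξ in {ξ : EuclideanSpace ℝ (Fin d) | 1 < ‖ξ‖},
          ENNReal.ofReal (‖ξ‖ ^ 4 / 4 *
            ∫ s in (0:ℝ)..t, Real.exp (-(t - s) * ‖ξ‖ ^ 2 / 2) *
              ∫ s' in (0:ℝ)..s, Real.exp (-(t - s') * ‖ξ‖ ^ 2 / 2) * |t - s'| ^ β) ∂μ
          < ⊤) :=
  stmt6_general β hβ
end

section
/- Let H₀ ∈ (0,1), H₁,…,H_d ∈ (0,1), and μ(dξ) = C ∏_{i=1}^d |ξ_i|^{1-2H_i} dξ on ℝ^d with C > 0. Then ∫_{ℝ^d} (1 + |ξ|^{4H₀})^{-1} ∏_{i=1}^d |ξ_i|^{1-2H_i} dξ < ∞ if and only if 2H₀ + Σ_{i=1}^d H_i > d. -/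
/-!
Write `a i = 1 - 2 H i` and `w ξ = ∏ |ξ i| ^ a i`. The measure `w dξ` is homogeneous: by the
scaling `ξ ↦ R ξ` it gives the ball of radius `R` the mass `R ^ (d + ∑ a i)` times the mass `V` of
the unit ball, and `0 < V < ∞` because every `a i > -1`. By the layer-cake formula the superlevel
sets of `(1 + ‖ξ‖ ^ β)⁻¹` are balls, so the integral equals `V ∫₀¹ (t⁻¹ - 1) ^ ((d + ∑ a i) / β) dt`,
which is finite iff `d + ∑ a i < β`; with `β = 4 H₀` this is `d < 2 H₀ + ∑ H i`.
-/

open MeasureTheory Set Real Module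
open scoped ENNReal Pointwise

lemma mul_lt_top_iff_of_ne_zero_of_ne_top {a b : ℝ≥0∞} (ha₀ : a ≠ 0) (ha : a ≠ ⊤) :
    a * b < ⊤ ↔ b < ⊤ := by
  simp [lt_top_iff_ne_top, ENNReal.mul_eq_top, ha₀, ha]

lemma lintegral_rpow_Ioo_lt_top_iff {s t : ℝ} (ht : 0 < t) :
    ∫⁻ x in Ioo 0 t, ENNReal.ofReal (x ^ s) < ⊤ ↔ -1 < s := by
  rw [← intervalIntegral.integrableOn_Ioo_rpow_iff ht, lt_top_iff_ne_top,
    lintegral_ofReal_ne_top_iff_integrable (by fun_prop)]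
  · rfl
  · filter_upwards [ae_restrict_mem measurableSet_Ioo] with x hx using rpow_nonneg hx.1.le s

lemma lintegral_inv_sub_one_rpow_lt_top_iff {p : ℝ} (hp : 0 ≤ p) :
    ∫⁻ t in Ioo 0 1, ENNReal.ofReal ((t⁻¹ - 1) ^ p) < ⊤ ↔ p < 1 := by
  constructor
  · intro hfin
    have hbound : ∀ t ∈ Ioo (0 : ℝ) 2⁻¹,
        ENNReal.ofReal (t ^ (-p)) ≤ ENNReal.ofReal (2 ^ p) * ENNReal.ofReal ((t⁻¹ - 1) ^ p) := by
      rintro t ⟨ht₀, ht⟩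
      have h2t : 2 ≤ t⁻¹ := by rw [le_inv_comm₀ two_pos ht₀]; exact ht.le
      rw [← ENNReal.ofReal_mul (by positivity), rpow_neg ht₀.le, ← inv_rpow ht₀.le,
        ← mul_rpow zero_le_two (by linarith)]
      exact ENNReal.ofReal_le_ofReal (rpow_le_rpow (by positivity) (by linarith) hp)
    have : ∫⁻ t in Ioo 0 2⁻¹, ENNReal.ofReal (t ^ (-p)) < ⊤ := calc
      _ ≤ ∫⁻ t in Ioo 0 2⁻¹, ENNReal.ofReal (2 ^ p) * ENNReal.ofReal ((t⁻¹ - 1) ^ p) :=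
          setLIntegral_mono (by fun_prop) hbound
      _ = ENNReal.ofReal (2 ^ p) * ∫⁻ t in Ioo 0 2⁻¹, ENNReal.ofReal ((t⁻¹ - 1) ^ p) :=
          lintegral_const_mul' _ _ ENNReal.ofReal_ne_top
      _ ≤ ENNReal.ofReal (2 ^ p) * ∫⁻ t in Ioo 0 1, ENNReal.ofReal ((t⁻¹ - 1) ^ p) := by
          gcongr; norm_num
      _ < ⊤ := ENNReal.mul_lt_top ENNReal.ofReal_lt_top hfin
    linarith [(lintegral_rpow_Ioo_lt_top_iff (by norm_num)).1 this]
  · intro hp₁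
    refine lt_of_le_of_lt (setLIntegral_mono (by fun_prop) fun t ht => ?_)
      ((lintegral_rpow_Ioo_lt_top_iff one_pos).2 (by linarith : -1 < -p))
    have h1t : 1 ≤ t⁻¹ := (one_le_inv₀ ht.1).2 ht.2.le
    rw [rpow_neg ht.1.le, ← inv_rpow ht.1.le]
    exact ENNReal.ofReal_le_ofReal (rpow_le_rpow (by linarith) (by linarith) hp)

lemma lt_inv_one_add_rpow_iff {β t r : ℝ} (hβ : 0 < β) (ht : t ∈ Ioo 0 1) (hr : 0 ≤ r) :
    t < (1 + r ^ β)⁻¹ ↔ r < (t⁻¹ - 1) ^ β⁻¹ := by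
  have h1t : 1 < t⁻¹ := (one_lt_inv₀ ht.1).2 ht.2
  rw [lt_inv_comm₀ ht.1 (by positivity), lt_rpow_inv_iff_of_pos hr (by linarith) hβ]
  constructor <;> intro h <;> linarith

section HomogeneousMeasure

variable {E : Type*} [NormedAddCommGroup E] [MeasurableSpace E] [OpensMeasurableSpace E]

lemma lintegral_inv_one_add_norm_rpow_eq {ν : Measure E} {α β : ℝ} {V : ℝ≥0∞} (hβ : 0 < β)
    (hν : ∀ r, 0 < r → ν (Metric.ball 0 r) = ENNReal.ofReal (r ^ α) * V) :
    ∫⁻ x, ENNReal.ofReal ((1 + ‖x‖ ^ β)⁻¹) ∂ν =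
      (∫⁻ t in Ioo 0 1, ENNReal.ofReal ((t⁻¹ - 1) ^ (α / β))) * V := by
  have hlt : ∀ t ∈ Ioo (0 : ℝ) 1,
      ν {x | t < (1 + ‖x‖ ^ β)⁻¹} = ENNReal.ofReal ((t⁻¹ - 1) ^ (α / β)) * V := by
    intro t ht
    have h1t : 0 < t⁻¹ - 1 := by linarith [(one_lt_inv₀ ht.1).2 ht.2]
    have hball : {x : E | t < (1 + ‖x‖ ^ β)⁻¹} = Metric.ball 0 ((t⁻¹ - 1) ^ β⁻¹) := by
      ext x
      exact (lt_inv_one_add_rpow_iff hβ ht (norm_nonneg x)).trans mem_ball_zero_iff.symm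
    rw [hball, hν _ (rpow_pos_of_pos h1t _), ← rpow_mul h1t.le, inv_mul_eq_div]
  have hge : ∀ t ∈ Ici (1 : ℝ), ν {x | t < (1 + ‖x‖ ^ β)⁻¹} = 0 := by
    intro t ht
    convert measure_empty (μ := ν)
    refine eq_empty_of_forall_notMem fun x hx => ?_
    have : (1 + ‖x‖ ^ β)⁻¹ ≤ 1 := inv_le_one_of_one_le₀ (by simp; positivity)
    exact absurd (hx.trans_le this) (not_lt.2 ht)
  rw [lintegral_eq_lintegral_meas_lt ν (ae_of_all _ fun x => by positivity) (by fun_prop),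
    ← Ioo_union_Ici_eq_Ioi zero_lt_one,
    lintegral_union measurableSet_Ici ((Iio_disjoint_Ici le_rfl).mono_left Ioo_subset_Iio_self),
    setLIntegral_congr_fun measurableSet_Ioo hlt, setLIntegral_congr_fun measurableSet_Ici hge,
    lintegral_zero, add_zero, lintegral_mul_const _ (by fun_prop)]

lemma lintegral_inv_one_add_norm_rpow_lt_top_iff {ν : Measure E} {α β : ℝ} {V : ℝ≥0∞}
    (hα : 0 ≤ α) (hβ : 0 < β) (hV₀ : V ≠ 0) (hV : V ≠ ⊤)
    (hν : ∀ r, 0 < r → ν (Metric.ball 0 r) = ENNReal.ofReal (r ^ α) * V) :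
    ∫⁻ x, ENNReal.ofReal ((1 + ‖x‖ ^ β)⁻¹) ∂ν < ⊤ ↔ α < β := by
  rw [lintegral_inv_one_add_norm_rpow_eq hβ hν, ← div_lt_one hβ,
    ← lintegral_inv_sub_one_rpow_lt_top_iff (div_nonneg hα hβ.le), mul_comm,
    mul_lt_top_iff_of_ne_zero_of_ne_top hV₀ hV]

end HomogeneousMeasure

lemma setLIntegral_smul_set_of_pos {E : Type*} [NormedAddCommGroup E] [NormedSpace ℝ E]
    [MeasurableSpace E] [BorelSpace E] [FiniteDimensional ℝ E] (μ : Measure E)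
    [μ.IsAddHaarMeasure] (f : E → ℝ≥0∞) (s : Set E) {R : ℝ} (hR : 0 < R) :
    ∫⁻ x in R • s, f x ∂μ = ENNReal.ofReal (R ^ finrank ℝ E) * ∫⁻ x in s, f (R • x) ∂μ := by
  have hR' : R⁻¹ ≠ 0 := inv_ne_zero hR.ne'
  have he : MeasurableEmbedding (R⁻¹ • · : E → E) :=
    (MeasurableEquiv.smul₀ R⁻¹ hR').measurableEmbedding
  calc ∫⁻ x in R • s, f x ∂μ = ∫⁻ x in s, f (R • x) ∂(Measure.map (R⁻¹ • ·) μ) := by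
        rw [he.restrict_map, he.lintegral_map]
        simp [preimage_smul₀ hR', smul_smul, hR.ne']
    _ = _ := by
        rw [Measure.map_addHaar_smul μ hR', Measure.restrict_smul, lintegral_smul_measure,
          inv_pow, inv_inv, abs_of_pos (by positivity), smul_eq_mul]

lemma integrableOn_abs_rpow_Ioo_neg_one_one {a : ℝ} (ha : -1 < a) :
    IntegrableOn (fun x : ℝ => |x| ^ a) (Ioo (-1) 1) := by
  have hpos : IntervalIntegrable (fun x : ℝ => |x| ^ a) volume 0 1 := by
    rw [intervalIntegrable_iff_integrableOn_Ioo_of_le zero_le_one]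
    exact ((intervalIntegral.integrableOn_Ioo_rpow_iff one_pos).2 ha).congr_fun
      (fun x hx => by rw [abs_of_pos hx.1]) measurableSet_Ioo
  have hneg : IntervalIntegrable (fun x : ℝ => |x| ^ a) volume (-1) 0 := by
    simpa [abs_neg] using ((IntervalIntegrable.iff_comp_neg (by finiteness)).1 hpos).symm
  rw [← intervalIntegrable_iff_integrableOn_Ioo_of_le (by norm_num)]
  exact hneg.trans hpos

section CoordPowWeight

variable {ι : Type*} [Fintype ι] (a : ι → ℝ)

/-- With `a i = 1 - 2 H i` this is the density of the spectral measure `μ`, up to the constant. -/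
noncomputable def coordPowWeight (ξ : EuclideanSpace ℝ ι) : ℝ≥0∞ := ∏ i, ENNReal.ofReal (|ξ i| ^ a i)

lemma measurable_coordPowWeight : Measurable (coordPowWeight a) := by
  unfold coordPowWeight
  fun_prop

lemma coordPowWeight_smul {R : ℝ} (hR : 0 < R) (ξ : EuclideanSpace ℝ ι) :
    coordPowWeight a (R • ξ) = ENNReal.ofReal (R ^ ∑ i, a i) * coordPowWeight a ξ := by
  simp only [coordPowWeight, PiLp.smul_apply, smul_eq_mul, abs_mul, abs_of_pos hR,
    mul_rpow hR.le (abs_nonneg _), ENNReal.ofReal_mul (rpow_nonneg hR.le _),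
    Finset.prod_mul_distrib, rpow_sum_of_pos hR,
    ENNReal.ofReal_prod_of_nonneg fun i _ => rpow_nonneg hR.le (a i)]

lemma withDensity_coordPowWeight_ball {R : ℝ} (hR : 0 < R) :
    volume.withDensity (coordPowWeight a) (Metric.ball 0 R) =
      ENNReal.ofReal (R ^ ((Fintype.card ι : ℝ) + ∑ i, a i)) *
        volume.withDensity (coordPowWeight a) (Metric.ball 0 1) := by
  rw [withDensity_apply _ measurableSet_ball, withDensity_apply _ measurableSet_ball,
    ← smul_unitBall_of_pos hR, setLIntegral_smul_set_of_pos _ _ _ hR]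
  simp only [coordPowWeight_smul a hR]
  rw [lintegral_const_mul' _ _ ENNReal.ofReal_ne_top, ← mul_assoc,
    ← ENNReal.ofReal_mul (by positivity), finrank_euclideanSpace, ← rpow_natCast,
    ← rpow_add hR]

lemma withDensity_coordPowWeight_ball_one_lt_top (ha : ∀ i, -1 < a i) :
    volume.withDensity (coordPowWeight a) (Metric.ball 0 1) < ⊤ := by
  set g : ι → ℝ → ℝ := fun i => (Ioo (-1) 1).indicator fun x => |x| ^ a i
  have hg₀ : ∀ i x, 0 ≤ g i x := fun i x =>
    indicator_nonneg (fun x _ => rpow_nonneg (abs_nonneg x) _) x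
  have hg : Integrable fun ξ : EuclideanSpace ℝ ι => ∏ i, g i (ξ i) :=
    ((PiLp.volume_preserving_ofLp ι).integrable_comp_emb
      (MeasurableEquiv.toLp 2 (ι → ℝ)).symm.measurableEmbedding).2
      (Integrable.fintype_prod fun i =>
        (integrableOn_abs_rpow_Ioo_neg_one_one (ha i)).integrable_indicator measurableSet_Ioo)
  have hball : ∀ ξ ∈ Metric.ball (0 : EuclideanSpace ℝ ι) 1,
      coordPowWeight a ξ = ENNReal.ofReal (∏ i, g i (ξ i)) := by
    intro ξ hξ
    have hcoord : ∀ i, ξ i ∈ Ioo (-1) 1 := fun i =>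
      abs_lt.1 (((PiLp.norm_apply_le ξ i).trans_lt (mem_ball_zero_iff.1 hξ)))
    rw [ENNReal.ofReal_prod_of_nonneg fun i _ => hg₀ i _]
    exact Finset.prod_congr rfl fun i _ => by simp [g, indicator_of_mem (hcoord i)]
  rw [withDensity_apply _ measurableSet_ball, setLIntegral_congr_fun measurableSet_ball hball]
  exact (setLIntegral_le_lintegral _ _).trans_lt hg.lintegral_lt_top

lemma ae_coordPowWeight_ne_zero : ∀ᵐ ξ : EuclideanSpace ℝ ι, coordPowWeight a ξ ≠ 0 := by
  have h : ∀ᵐ x : ι → ℝ, ∀ i, x i ≠ 0 := ae_all_iff.2 fun i =>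
    measure_mono_null (fun x hx => by simpa using hx)
      (Measure.pi_eval_preimage_null _ (Real.volume_singleton (a := 0)))
  filter_upwards [(PiLp.volume_preserving_ofLp ι).quasiMeasurePreserving.ae h] with ξ hξ
  simp only [coordPowWeight, Finset.prod_ne_zero_iff, Finset.mem_univ, ne_eq,
    ENNReal.ofReal_eq_zero, not_le, forall_const]
  exact fun i => rpow_pos_of_pos (abs_pos.2 (hξ i)) _

lemma withDensity_coordPowWeight_ball_one_pos :
    0 < volume.withDensity (coordPowWeight a) (Metric.ball 0 1) := by
  rw [withDensity_apply _ measurableSet_ball, setLIntegral_pos_iff (measurable_coordPowWeight a),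
    inter_comm, measure_inter_conull]
  · exact Metric.measure_ball_pos _ _ one_pos
  · exact ae_iff.1 (ae_coordPowWeight_ne_zero a)

end CoordPowWeight

theorem stmt13_general (d : ℕ) (H₀ : ℝ) (H : Fin d → ℝ) (C : ℝ)
    (h0 : H₀ ∈ Set.Ioo (0:ℝ) 1) (hH : ∀ i, H i ∈ Set.Ioo (0:ℝ) 1) (hC : 0 < C) :
    (∫⁻ ξ : EuclideanSpace ℝ (Fin d),
        ENNReal.ofReal ((1 + ‖ξ‖ ^ (4 * H₀))⁻¹ * (C * ∏ i, |ξ i| ^ (1 - 2 * H i))) < ⊤)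
      ↔ (d : ℝ) < 2 * H₀ + ∑ i, H i := by
  set a : Fin d → ℝ := fun i => 1 - 2 * H i
  have ha : ∀ i, -1 < a i := fun i => by linarith [(hH i).2]
  have hsum : ∑ i, a i = d - 2 * ∑ i, H i := by
    simp [a, Finset.sum_sub_distrib, Finset.mul_sum]
  have hH₁ : ∑ i, H i ≤ d := by
    simpa using Finset.sum_le_sum fun i (_ : i ∈ Finset.univ) => (hH i).2.le
  have hα : 0 ≤ (Fintype.card (Fin d) : ℝ) + ∑ i, a i := by
    rw [Fintype.card_fin, hsum]; linarith
  have hintegrand : ∀ ξ : EuclideanSpace ℝ (Fin d),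
      ENNReal.ofReal ((1 + ‖ξ‖ ^ (4 * H₀))⁻¹ * (C * ∏ i, |ξ i| ^ (1 - 2 * H i))) =
        ENNReal.ofReal C * (coordPowWeight a *
          fun ξ : EuclideanSpace ℝ (Fin d) => ENNReal.ofReal ((1 + ‖ξ‖ ^ (4 * H₀))⁻¹)) ξ := by
    intro ξ
    rw [ENNReal.ofReal_mul (by positivity), ENNReal.ofReal_mul hC.le,
      ENNReal.ofReal_prod_of_nonneg fun i _ => rpow_nonneg (abs_nonneg _) _]
    simp only [Pi.mul_apply, coordPowWeight, a]
    ring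
  rw [lintegral_congr hintegrand, lintegral_const_mul' _ _ ENNReal.ofReal_ne_top,
    ← lintegral_withDensity_eq_lintegral_mul _ (measurable_coordPowWeight a) (by fun_prop),
    mul_lt_top_iff_of_ne_zero_of_ne_top (ENNReal.ofReal_pos.2 hC).ne' ENNReal.ofReal_ne_top,
    lintegral_inv_one_add_norm_rpow_lt_top_iff hα (by linarith [h0.1])
      (withDensity_coordPowWeight_ball_one_pos a).ne'
      (withDensity_coordPowWeight_ball_one_lt_top a ha).ne
      fun r hr => withDensity_coordPowWeight_ball a hr, Fintype.card_fin, hsum]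
  constructor <;> intro <;> linarith

theorem stmt13 (d : ℕ) (hd : 0 < d) (H₀ : ℝ) (H : Fin d → ℝ) (C : ℝ)
    (h0 : H₀ ∈ Set.Ioo (0:ℝ) 1) (hH : ∀ i, H i ∈ Set.Ioo (0:ℝ) 1) (hC : 0 < C) :
    (∫⁻ ξ : EuclideanSpace ℝ (Fin d),
        ENNReal.ofReal ((1 + ‖ξ‖ ^ (4 * H₀))⁻¹ * (C * ∏ i, |ξ i| ^ (1 - 2 * H i))) < ⊤)
      ↔ (d : ℝ) < 2 * H₀ + ∑ i, H i :=
  stmt13_general d H₀ H C h0 hH hC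
end
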